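/- Let ω ∈ [0, 1/3), set p_A = (ω + 1)/2 and p_U = 2ω. Then p_A − p_U = (1 − 3ω)/2 > 0, and for any positive integer n, reals ℓ_A, ℓ_U, ℓ_B > 0, ρ = ℓ_A/ℓ_U, threshold τ̂ = n(p_A + p_U)/2 − ln(ρ)/(2(1 − 3ω)) satisfying n·p_U ≤ τ̂ ≤ n·p_A, and independent random variables ε₁, …, ε_n in [0,1] with E[ε_i] ≥ p_A for all i, it holds that n·ℓ_B + P(Σ_{i=1}^n ε_i < τ̂)·ℓ_A ≤ n·ℓ_B + exp(−n(1 − 3ω)²/8)·√(ℓ_A·ℓ_U). -/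

import Mathlib

/-!
Write `Δ = pA - pU = (1 - 3w)/2` and `ρ = ℓA/ℓU`. The threshold sits `s = n pA - τ = nΔ/2 + log ρ/(4Δ)`
below the attacker's mean score, so Hoeffding's inequality bounds the tail probability by
`exp (-2 s² / n)`. Completing the square, `2 s² / n = nΔ²/2 + log ρ / 2 + (log ρ)² / (8 n Δ²)`, hence
`exp (-2 s² / n) ℓA ≤ exp (-nΔ²/2) ρ^(-1/2) ℓA = exp (-nΔ²/2) √(ℓA ℓU)`.
-/

open MeasureTheory ProbabilityTheory Real Finset

theorem measureReal_sum_le_le_of_iIndepFun_of_mem_Icc {ι Ω : Type*} [MeasurableSpace Ω]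
    {μ : Measure Ω} [IsProbabilityMeasure μ] {X : ι → Ω → ℝ} (h_indep : iIndepFun X μ)
    (h_meas : ∀ i, AEMeasurable (X i) μ) {a b : ℝ} (h_bdd : ∀ i, ∀ᵐ ω ∂μ, X i ω ∈ Set.Icc a b)
    (s : Finset ι) {p t : ℝ} (h_mean : ∀ i ∈ s, p ≤ μ[X i]) (ht : 0 ≤ t) :
    μ.real {ω | ∑ i ∈ s, X i ω ≤ #s * p - t} ≤ exp (-2 * t ^ 2 / (#s * (b - a) ^ 2)) := by
  have h_subG : ∀ i ∈ s, HasSubgaussianMGF (fun ω ↦ μ[X i] - X i ω) ((‖b - a‖₊ / 2) ^ 2) μ :=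
    fun i _ ↦ ((hasSubgaussianMGF_of_mem_Icc (h_meas i) (h_bdd i)).neg).congr
      (ae_of_all _ fun ω ↦ by simp)
  have h_indep' : iIndepFun (fun i ω ↦ μ[X i] - X i ω) μ := by
    exact h_indep.comp (fun (i : ι) (y : ℝ) ↦ μ[X i] - y) fun _ ↦ measurable_id.const_sub _
  have h_sub : {ω | ∑ i ∈ s, X i ω ≤ #s * p - t} ⊆ {ω | t ≤ ∑ i ∈ s, (μ[X i] - X i ω)} := by
    intro ω hω
    have h_mean_sum : #s * p ≤ ∑ i ∈ s, μ[X i] := by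
      simpa using card_nsmul_le_sum s _ p h_mean
    simp only [Set.mem_ofPred_eq, sum_sub_distrib] at hω ⊢
    linarith
  calc μ.real {ω | ∑ i ∈ s, X i ω ≤ #s * p - t}
      ≤ μ.real {ω | t ≤ ∑ i ∈ s, (μ[X i] - X i ω)} := measureReal_mono h_sub
    _ ≤ exp (-t ^ 2 / (2 * ∑ i ∈ s, ((‖b - a‖₊ / 2) ^ 2 : NNReal))) :=
        HasSubgaussianMGF.measure_sum_ge_le_of_iIndepFun h_indep' h_subG ht
    _ = exp (-2 * t ^ 2 / (#s * (b - a) ^ 2)) := by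
        push_cast
        rw [sum_const, nsmul_eq_mul, norm_eq_abs, div_pow, sq_abs]
        field_simp

theorem half_mul_sq_add_half_le {n Δ L : ℝ} (hn : 0 < n) (hΔ : Δ ≠ 0) :
    n * Δ ^ 2 / 2 + L / 2 ≤ 2 * (n * Δ / 2 + L / (4 * Δ)) ^ 2 / n := by
  have h_square : 2 * (n * Δ / 2 + L / (4 * Δ)) ^ 2 / n - (n * Δ ^ 2 / 2 + L / 2) =
      L ^ 2 / (8 * n * Δ ^ 2) := by
    field_simp
    ring
  have : 0 ≤ L ^ 2 / (8 * n * Δ ^ 2) := by positivity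
  linarith

theorem exp_neg_log_div_div_two_mul_self {a b : ℝ} (ha : 0 < a) (hb : 0 < b) :
    exp (-log (a / b) / 2) * a = √(a * b) := by
  have h_sq : (exp (-log (a / b) / 2) * a) ^ 2 = a * b := by
    rw [mul_pow, ← exp_nat_mul, show ((2 : ℕ) : ℝ) * (-log (a / b) / 2) = -log (a / b) by ring,
      exp_neg, exp_log (div_pos ha hb)]
    field_simp
  rw [← h_sq, sqrt_sq (by positivity)]

theorem exp_neg_two_mul_sq_div_mul_le {n Δ ℓA ℓU : ℝ} (hn : 0 < n) (hΔ : Δ ≠ 0)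
    (hℓA : 0 < ℓA) (hℓU : 0 < ℓU) :
    exp (-2 * (n * Δ / 2 + log (ℓA / ℓU) / (4 * Δ)) ^ 2 / n) * ℓA
      ≤ exp (-(n * Δ ^ 2) / 2) * √(ℓA * ℓU) := by
  rw [← exp_neg_log_div_div_two_mul_self hℓA hℓU, ← mul_assoc, ← exp_add]
  gcongr
  have := half_mul_sq_add_half_le (L := log (ℓA / ℓU)) hn hΔ
  rw [neg_mul, neg_div]
  linarith

theorem swiss_knife_bound_general
    (w : ℝ) (hw1 : w < 1 / 3)
    (pA pU : ℝ) (hpA : pA = (w + 1) / 2) (hpU : pU = 2 * w) :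
    pA - pU = (1 - 3 * w) / 2 ∧ 0 < pA - pU ∧
    ∀ {Ω : Type} [MeasureSpace Ω] [IsProbabilityMeasure (ℙ : Measure Ω)]
      (n : ℕ), 0 < n →
      ∀ (ℓA ℓU ℓB : ℝ), 0 < ℓA → 0 < ℓU → 0 < ℓB →
      ∀ (ρ : ℝ), ρ = ℓA / ℓU →
      ∀ (τ : ℝ), τ = n * (pA + pU) / 2 - Real.log ρ / (2 * (1 - 3 * w)) →
      n * pU ≤ τ → τ ≤ n * pA →
      ∀ (ε : Fin n → Ω → ℝ),
        (∀ i, Measurable (ε i)) →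
        iIndepFun ε ℙ →
        (∀ i ω, ε i ω ∈ Set.Icc (0 : ℝ) 1) →
        (∀ i, pA ≤ ∫ ω, ε i ω) →
        n * ℓB + (ℙ {ω | ∑ i, ε i ω < τ}).toReal * ℓA
          ≤ n * ℓB + Real.exp (-(n * (1 - 3 * w) ^ 2) / 8) * Real.sqrt (ℓA * ℓU) := by
  subst hpA hpU
  refine ⟨by ring, by linarith, ?_⟩
  intro Ω _ _ n hn ℓA ℓU ℓB hℓA hℓU _ ρ hρ τ hτ _ hτA ε hε_meas hε_indep hε_bdd hε_mean
  have hn' : (0 : ℝ) < n := Nat.cast_pos.2 hn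
  have hΔ : (1 - 3 * w) / 2 ≠ 0 := by linarith
  have h_gap : n * ((w + 1) / 2) - τ =
      n * ((1 - 3 * w) / 2) / 2 + Real.log (ℓA / ℓU) / (4 * ((1 - 3 * w) / 2)) := by
    rw [hτ, hρ]
    ring
  have h_tail : (ℙ {ω | ∑ i, ε i ω ≤ τ}).toReal
      ≤ Real.exp (-2 * (n * ((w + 1) / 2) - τ) ^ 2 / n) := by
    simpa [measureReal_def] using measureReal_sum_le_le_of_iIndepFun_of_mem_Icc hε_indep
      (fun i ↦ (hε_meas i).aemeasurable) (fun i ↦ ae_of_all _ (hε_bdd i)) univ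
      (fun i _ ↦ hε_mean i) (sub_nonneg.2 hτA)
  rw [h_gap] at h_tail
  gcongr n * ℓB + ?_
  calc (ℙ {ω | ∑ i, ε i ω < τ}).toReal * ℓA
      ≤ (ℙ {ω | ∑ i, ε i ω ≤ τ}).toReal * ℓA := by
        gcongr
        · exact measure_ne_top _ _
        · exact le_of_lt
    _ ≤ _ := by gcongr
    _ ≤ _ := exp_neg_two_mul_sq_div_mul_le hn' hΔ hℓA hℓU
    _ = _ := by congr 2; ring

/-- Application of Theorem 1 to the Swiss-Knife / Hitomi protocols: with channel noise
`w ∈ [0, 1/3)`, `pA = (w + 1)/2`, `pU = 2w`, the gap is `pA - pU = (1 - 3w)/2 > 0` and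
the attacker's expected loss is bounded by `n ℓB + exp (-n (1 - 3w)² / 8) √(ℓA ℓU)`. -/
theorem swiss_knife_bound
    (w : ℝ) (hw0 : 0 ≤ w) (hw1 : w < 1 / 3)
    (pA pU : ℝ) (hpA : pA = (w + 1) / 2) (hpU : pU = 2 * w) :
    pA - pU = (1 - 3 * w) / 2 ∧ 0 < pA - pU ∧
    ∀ {Ω : Type} [MeasureSpace Ω] [IsProbabilityMeasure (ℙ : Measure Ω)]
      (n : ℕ), 0 < n →
      ∀ (ℓA ℓU ℓB : ℝ), 0 < ℓA → 0 < ℓU → 0 < ℓB →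
      ∀ (ρ : ℝ), ρ = ℓA / ℓU →
      ∀ (τ : ℝ), τ = n * (pA + pU) / 2 - Real.log ρ / (2 * (1 - 3 * w)) →
      n * pU ≤ τ → τ ≤ n * pA →
      ∀ (ε : Fin n → Ω → ℝ),
        (∀ i, Measurable (ε i)) →
        iIndepFun ε ℙ →
        (∀ i ω, ε i ω ∈ Set.Icc (0 : ℝ) 1) →
        (∀ i, pA ≤ ∫ ω, ε i ω) →
        n * ℓB + (ℙ {ω | ∑ i, ε i ω < τ}).toReal * ℓA
          ≤ n * ℓB + Real.exp (-(n * (1 - 3 * w) ^ 2) / 8) * Real.sqrt (ℓA * ℓU) :=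
  swiss_knife_bound_general w hw1 pA pU hpA hpU
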